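/- Farthest Point Sampling (greedy k-center): for a finite metric space X and the greedy selection that picks an arbitrary first center and then iteratively picks the point farthest from the current set of centers, the resulting covering radius r_k after selecting k centers satisfies r_k ≤ 2·r_k*, where r_k* is the optimal k-center covering radius. -/

import Mathlib

/-- Covering radius of the first `k` points of the sequence `e` in a finite metric space. -/
noncomputable def covRad {X : Type*} [MetricSpace X] [Fintype X] (e : ℕ → X) (k : ℕ) : ℝ :=
  ⨆ v : X, ⨅ i : Fin k, dist v (e i)

lemma inf_le_covRad {X : Type*} [MetricSpace X] [Fintype X] (e : ℕ → X) (k : ℕ) (v : X) :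
    (⨅ i : Fin k, dist v (e i)) ≤ covRad e k := by
  rw [covRad]
  exact le_ciSup (f := fun v : X => ⨅ i : Fin k, dist v (e i)) (Finite.bddAbove_range _) v

lemma covRad_anti {X : Type*} [MetricSpace X] [Fintype X] [Nonempty X] (e : ℕ → X) {j k : ℕ}
    (hj : 1 ≤ j) (hjk : j ≤ k) : covRad e k ≤ covRad e j := by
  rw [covRad]
  apply ciSup_le
  intro v
  refine le_trans ?_ (inf_le_covRad e j v)
  have hne : Nonempty (Fin j) := Fin.pos_iff_nonempty.mp hj
  exact le_ciInf fun i => ciInf_le (f := fun i : Fin k => dist v (e i)) (Finite.bddBelow_range _) ⟨i.1, lt_of_lt_of_le i.2 hjk⟩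

lemma covRad_le_dist {X : Type*} [MetricSpace X] [Fintype X] [Nonempty X] {e : ℕ → X} {k i j : ℕ}
    (hgreedy : ∀ j, 1 ≤ j →
      (⨅ i : Fin j, dist (e j) (e i)) = ⨆ v : X, ⨅ i : Fin j, dist v (e i))
    (hj : 1 ≤ j) (hjk : j ≤ k) (hij : i < j) :
    covRad e k ≤ dist (e j) (e i) := by
  refine le_trans (covRad_anti e hj hjk) ?_
  have h : covRad e j = ⨅ i : Fin j, dist (e j) (e i) := (hgreedy j hj).symm
  rw [h]
  exact ciInf_le (f := fun i : Fin j => dist (e j) (e i)) (Finite.bddBelow_range _) ⟨i, hij⟩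

/-- Gonzalez's theorem: greedy farthest point sampling (pick an arbitrary first center,
then iteratively a point farthest from the current centers) gives a covering radius
within a factor 2 of the optimal `k`-center covering radius. -/
theorem gonzalez_two_approx {X : Type*} [MetricSpace X] [Fintype X] [Nonempty X]
    (e : ℕ → X) (k : ℕ) (hk : 1 ≤ k)
    (hgreedy : ∀ j, 1 ≤ j →
      (⨅ i : Fin j, dist (e j) (e i)) = ⨆ v : X, ⨅ i : Fin j, dist v (e i)) :
    covRad e k ≤
      2 * sInf {r : ℝ | ∃ S : Finset X, S.card = k ∧ ∀ v : X, ∃ s ∈ S, dist v s ≤ r} := by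
  classical
  set A := {r : ℝ | ∃ S : Finset X, S.card = k ∧ ∀ v : X, ∃ s ∈ S, dist v s ≤ r} with hA
  by_cases hne : A.Nonempty
  · -- main case: for any r ∈ A, covRad e k ≤ 2r by pigeonhole
    have hbound : ∀ r ∈ A, covRad e k ≤ 2 * r := by
      rintro r ⟨S, hcard, hcov⟩
      have hpick : ∀ i : Fin (k + 1), ∃ s ∈ S, dist (e i) s ≤ r := fun i => hcov (e i)
      choose f hfS hfd using hpick
      obtain ⟨a, -, b, -, hab, hfab⟩ :=
        Finset.exists_ne_map_eq_of_card_lt_of_maps_to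
          (s := (Finset.univ : Finset (Fin (k + 1)))) (t := S)
          (by simp [hcard]) (fun a _ => hfS a)
      have key : ∀ a b : Fin (k + 1), a.1 < b.1 → f a = f b → covRad e k ≤ 2 * r := by
        intro a b h hfe
        have hb1 : 1 ≤ b.1 := (Nat.zero_le a.1).trans_lt h
        have h1 : covRad e k ≤ dist (e b.1) (e a.1) :=
          covRad_le_dist hgreedy hb1 (Nat.lt_succ_iff.mp b.2) h
        have t := dist_triangle (e b.1) (f b) (e a.1)
        have hbr : dist (e b.1) (f b) ≤ r := hfd b
        have har : dist (f b) (e a.1) ≤ r := by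
          rw [← hfe, dist_comm]; exact hfd a
        linarith
      rcases hab.lt_or_gt with h | h
      · exact key a b h hfab
      · exact key b a h hfab.symm
    have h1 : covRad e k / 2 ≤ sInf A :=
      le_csInf hne fun r hr => by linarith [hbound r hr]
    linarith
  · -- degenerate case: A empty; then sInf A = 0 and covRad e k ≤ 0
    rw [Set.not_nonempty_iff_eq_empty] at hne
    rw [hne, Real.sInf_empty, mul_zero]
    by_contra hpos
    push_neg at hpos
    -- the first k greedy points are distinct
    have hinj : Function.Injective (fun i : Fin k => e i.1) := by
      have key : ∀ a b : Fin k, a.1 < b.1 → e a.1 ≠ e b.1 := by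
        intro a b h heq
        have h1 : covRad e k ≤ dist (e b.1) (e a.1) :=
          covRad_le_dist hgreedy ((Nat.zero_le a.1).trans_lt h) b.2.le h
        rw [heq, dist_self] at h1
        linarith
      intro a b heq
      rcases lt_trichotomy a.1 b.1 with h | h | h
      · exact absurd heq (key a b h)
      · exact Fin.ext h
      · exact absurd heq.symm (key b a h)
    -- then the image is a k-element covering set, contradicting A = ∅
    have hmem : covRad e k ∈ A := by
      refine ⟨Finset.image (fun i : Fin k => e i.1) Finset.univ, ?_, ?_⟩
      · rw [Finset.card_image_of_injective _ hinj, Finset.card_univ, Fintype.card_fin]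
      · intro v
        have hnonempty : Nonempty (Fin k) := Fin.pos_iff_nonempty.mp hk
        obtain ⟨i, hi⟩ := Finite.exists_min (fun i : Fin k => dist v (e i.1))
        refine ⟨e i.1, Finset.mem_image_of_mem _ (Finset.mem_univ i), ?_⟩
        exact le_trans (le_ciInf hi) (inf_le_covRad e k v)
    rw [hne] at hmem
    exact hmem
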